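/- Suppose τ₁ ln R = τ₂/2 (equivalently R = exp(τ₂/(2τ₁))). Then for every constant vector v ∈ ℝ² and every x ∈ D, ∫_{∂D} G⁰(x − y) v dσ(y) = 0. In particular, the elastostatic single-layer operator S_D : φ ↦ ∫_{∂D} G⁰(· − y) φ(y) dσ(y) on the disk annihilates all constant densities and hence is not injective on L²(∂D)². -/

import Mathlib

open MeasureTheory

/-- `τ₁ = (1/2)(1/μ + 1/(λ+2μ))`. -/
noncomputable def tau1 (lam mu : ℝ) : ℝ := (1 / 2) * (1 / mu + 1 / (lam + 2 * mu))

/-- `τ₂ = (1/2)(1/μ − 1/(λ+2μ))`. -/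
noncomputable def tau2 (lam mu : ℝ) : ℝ := (1 / 2) * (1 / mu - 1 / (lam + 2 * mu))

/-- The Kelvin matrix (elastostatic fundamental solution of the Lamé system):
`G⁰_{ij}(x) = (τ₁/(2π)) δ_{ij} ln|x| − (τ₂/(2π)) x_i x_j / |x|²`. -/
noncomputable def KelvinG0 (lam mu : ℝ) (x : EuclideanSpace ℝ (Fin 2)) :
    Matrix (Fin 2) (Fin 2) ℝ := fun i j =>
  tau1 lam mu / (2 * Real.pi) * (if i = j then Real.log ‖x‖ else 0)
    - tau2 lam mu / (2 * Real.pi) * (x i * x j / ‖x‖ ^ 2)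

/-! In complex coordinates the Kelvin matrix acts on `ζ` as
`(τ₁/(2π) ln|z| − τ₂/(4π)) ζ − τ₂/(4π) (z / z̄) ζ̄`. The Hausdorff measure on the circle is
rotation invariant, so integrating over `∂D` is the same as integrating circle averages. For
`|a| < R` the circle average of `ln|a − z|` is `ln R`, and that of `(a − z) / conj (a − z)`
vanishes by the mean value property. Hence
`∫_{∂D} G⁰(x − y) v dσ(y) = σ(∂D) (τ₁ ln R − τ₂/2)/(2π) v`, which is zero when `τ₁ ln R = τ₂/2`. -/

open Complex ComplexConjugate Metric Real

/-- With `x = (Re z, Im z)` and `u = z / z̄` one has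
`x xᵀ / |x|² = (1 + [[Re u, Im u], [Im u, -Re u]]) / 2`, and the reflection matrix acts on `ζ`
as `ζ ↦ u ζ̄`. -/
noncomputable def kelvinComplex (lam mu : ℝ) (z ζ : ℂ) : ℂ :=
  (tau1 lam mu / (2 * π) * Real.log ‖z‖ - tau2 lam mu / (4 * π)) • ζ
    - (tau2 lam mu / (4 * π)) • (z / conj z * conj ζ)

noncomputable def complexEquivFinTwo : ℂ ≃L[ℝ] (Fin 2 → ℝ) :=
  orthonormalBasisOneI.repr.toContinuousLinearEquiv.trans (EuclideanSpace.equiv (Fin 2) ℝ)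

theorem kelvinG0_repr_mulVec (lam mu : ℝ) {z : ℂ} (hz : z ≠ 0) (ζ : ℂ) :
    (KelvinG0 lam mu (orthonormalBasisOneI.repr z)).mulVec (complexEquivFinTwo ζ)
      = complexEquivFinTwo (kelvinComplex lam mu z ζ) := by
  have hn : z.re ^ 2 + z.im ^ 2 ≠ 0 := by
    simpa [normSq_apply, sq] using (normSq_pos.2 hz).ne'
  have hsq : ‖z‖ ^ 2 = z.re ^ 2 + z.im ^ 2 := by rw [Complex.sq_norm, normSq_apply]; ring
  ext i
  fin_cases i <;>
  simp [complexEquivFinTwo, KelvinG0, kelvinComplex, Matrix.mulVec, dotProduct, Fin.sum_univ_two,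
    div_re, div_im, normSq_apply, hsq] <;>
  field_simp <;> ring

theorem continuousOn_kelvinComplex (lam mu : ℝ) (ζ : ℂ) :
    ContinuousOn (kelvinComplex lam mu · ζ) {0}ᶜ := by
  have hlog : ContinuousOn (fun z : ℂ => Real.log ‖z‖) {0}ᶜ :=
    ContinuousOn.log (by fun_prop) fun z hz => norm_ne_zero_iff.2 hz
  have hquot : ContinuousOn (fun z : ℂ => z / conj z) {0}ᶜ :=
    continuousOn_id.div (by fun_prop) fun z hz => (map_ne_zero _).2 hz
  unfold kelvinComplex
  fun_prop

theorem measurable_kelvinComplex (lam mu : ℝ) (ζ : ℂ) : Measurable (kelvinComplex lam mu · ζ) := by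
  unfold kelvinComplex
  fun_prop

theorem sub_ne_zero_of_norm_lt_of_mem_sphere {E : Type*} [SeminormedAddCommGroup E]
    {a w : E} {R : ℝ} (ha : ‖a‖ < R) (hw : w ∈ sphere (0 : E) R) : a - w ≠ 0 := by
  rw [mem_sphere_zero_iff_norm] at hw
  exact sub_ne_zero.2 fun h => ha.ne (h ▸ hw)

/-- On the circle `|z| = R` one has `conj z = R² / z`, so `(a - z) / conj (a - z)` agrees there
with a function holomorphic on the closed disk and vanishing at its centre. -/
theorem circleAverage_sub_div_conj_sub_mul {a : ℂ} {R : ℝ} (ha : ‖a‖ < R) (b : ℂ) :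
    circleAverage (fun z => (a - z) / conj (a - z) * b) 0 R = 0 := by
  have hR : 0 < R := (norm_nonneg a).trans_lt ha
  have hden : ∀ z ∈ closedBall (0 : ℂ) R, conj a * z - (R : ℂ) ^ 2 ≠ 0 := by
    intro z hz h
    rw [mem_closedBall_zero_iff] at hz
    have : ‖conj a * z‖ = R ^ 2 := by rw [sub_eq_zero.1 h]; norm_cast; simp
    rw [norm_mul, RCLike.norm_conj] at this
    nlinarith [norm_nonneg a, norm_nonneg z]
  have hmean : circleAverage (fun z => (a - z) * z / (conj a * z - (R : ℂ) ^ 2) * b) 0 R = 0 := by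
    rw [DiffContOnCl.circleAverage]
    · simp
    apply DifferentiableOn.diffContOnCl
    rw [abs_of_pos hR, closure_ball _ hR.ne']
    exact (DifferentiableOn.div (by fun_prop) (by fun_prop) hden).mul_const b
  refine (circleAverage_congr_sphere fun z hz => ?_).trans hmean
  congr 1
  rw [abs_of_pos hR, mem_sphere_zero_iff_norm] at hz
  have hzz : z * conj z = (R : ℂ) ^ 2 := by rw [mul_conj, normSq_eq_norm_sq, hz]; norm_cast
  have hne : conj a * z - (R : ℂ) ^ 2 ≠ 0 := hden z (by simp [hz])
  rw [map_sub, div_eq_div_iff (by contrapose! hne; linear_combination z * hne + hzz) hne]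
  linear_combination (a - z) * hzz

theorem circleAverage_log_norm_sub {a : ℂ} {R : ℝ} (ha : ‖a‖ < R) :
    circleAverage (fun w => Real.log ‖a - w‖) 0 R = Real.log R := by
  simp_rw [norm_sub_rev a]
  exact circleAverage_log_norm_sub_const_of_mem_closedBall
    (by simpa using ha.le.trans (le_abs_self R))

theorem circleAverage_smul_const {E : Type*} [NormedAddCommGroup E] [NormedSpace ℝ E]
    [CompleteSpace E] {f : ℂ → ℝ} {c : ℂ} {R : ℝ} (hf : CircleIntegrable f c R) (v : E) :
    circleAverage (fun z => f z • v) c R = circleAverage f c R • v :=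
  ((ContinuousLinearMap.id ℝ ℝ).smulRight v).circleAverage_comp_comm hf

theorem circleAverage_kelvinComplex_sub (lam mu : ℝ) {a : ℂ} {R : ℝ} (ha : ‖a‖ < R) (ζ : ℂ) :
    circleAverage (fun w => kelvinComplex lam mu (a - w) ζ) 0 R
      = ((tau1 lam mu * Real.log R - tau2 lam mu / 2) / (2 * π)) • ζ := by
  set c₁ := tau1 lam mu / (2 * π)
  set c₂ := tau2 lam mu / (4 * π)
  have hR : 0 ≤ R := (norm_nonneg a).trans ha.le
  have hne : ∀ w ∈ sphere (0 : ℂ) R, a - w ≠ 0 := fun _ => sub_ne_zero_of_norm_lt_of_mem_sphere ha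
  have hlog : ContinuousOn (fun w => Real.log ‖a - w‖) (sphere 0 R) :=
    ContinuousOn.log (by fun_prop) fun w hw => norm_ne_zero_iff.2 (hne w hw)
  have hquot : ContinuousOn (fun w => (a - w) / conj (a - w)) (sphere 0 R) :=
    ContinuousOn.div (by fun_prop) (by fun_prop) fun w hw => (map_ne_zero _).2 (hne w hw)
  have hlogInt : CircleIntegrable (fun w => c₁ • Real.log ‖a - w‖) 0 R :=
    ContinuousOn.circleIntegrable hR (by fun_prop)
  have hscalarInt : CircleIntegrable (fun w => c₁ • Real.log ‖a - w‖ - c₂) 0 R :=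
    hlogInt.sub (circleIntegrable_const _ _ _)
  have hfirstInt : CircleIntegrable (fun w => (c₁ • Real.log ‖a - w‖ - c₂) • ζ) 0 R :=
    ContinuousOn.circleIntegrable hR (by fun_prop)
  have hsecondInt : CircleIntegrable (fun w => c₂ • ((a - w) / conj (a - w) * conj ζ)) 0 R :=
    ContinuousOn.circleIntegrable hR (by fun_prop)
  have hscalar : circleAverage (fun w => c₁ • Real.log ‖a - w‖ - c₂) 0 R
      = (tau1 lam mu * Real.log R - tau2 lam mu / 2) / (2 * π) := by
    rw [circleAverage_fun_sub hlogInt (circleIntegrable_const _ _ _), circleAverage_fun_smul,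
      circleAverage_const, circleAverage_log_norm_sub ha, smul_eq_mul]
    simp only [c₁, c₂]
    field_simp
    ring
  simp only [kelvinComplex]
  change circleAverage (fun w => (c₁ • Real.log ‖a - w‖ - c₂) • ζ
    - c₂ • ((a - w) / conj (a - w) * conj ζ)) 0 R = _
  rw [circleAverage_fun_sub hfirstInt hsecondInt, circleAverage_fun_smul,
    circleAverage_sub_div_conj_sub_mul ha, circleAverage_smul_const hscalarInt, hscalar]
  simp

theorem circleAverage_norm_eq_intervalIntegral_rotate {E : Type*} [NormedAddCommGroup E]
    [NormedSpace ℝ E] (F : ℂ → E) (w : ℂ) :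
    circleAverage F 0 ‖w‖ = (2 * π)⁻¹ • ∫ θ in 0..2 * π, F (exp (θ * I) * w) := by
  rw [circleAverage_eq_integral_add (arg w)]
  congr 2 with θ
  rw [circleMap, zero_add, ofReal_add, add_mul, Complex.exp_add, mul_left_comm,
    norm_mul_exp_arg_mul_I]

theorem integral_eq_integral_circleAverage_norm {E : Type*} [NormedAddCommGroup E]
    [NormedSpace ℝ E] [CompleteSpace E] {ν : Measure ℂ} [SFinite ν]
    (hν : ∀ θ : ℝ, MeasurePreserving (exp (θ * I) * ·) ν ν)
    {F : ℂ → E} (hFm : StronglyMeasurable F) (hFi : Integrable F ν) :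
    ∫ w, F w ∂ν = ∫ w, circleAverage F 0 ‖w‖ ∂ν := by
  have hemb (θ : ℝ) : MeasurableEmbedding (exp (θ * I) * ·) :=
    measurableEmbedding_mulLeft₀ (exp_ne_zero _)
  have hint : Integrable (Function.uncurry fun (θ : ℝ) w => F (exp (θ * I) * w))
      ((volume.restrict (Set.uIoc 0 (2 * π))).prod ν) := by
    refine (integrable_prod_iff (hFm.comp_measurable (by fun_prop)).aestronglyMeasurable).2
      ⟨.of_forall fun θ => ((hν θ).integrable_comp_emb (hemb θ)).2 hFi, ?_⟩
    have hnorm (θ : ℝ) : ∫ w, ‖F (exp (θ * I) * w)‖ ∂ν = ∫ w, ‖F w‖ ∂ν :=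
      (hν θ).integral_comp (hemb θ) (‖F ·‖)
    have : IsFiniteMeasure (volume.restrict (Set.uIoc 0 (2 * π))) :=
      isFiniteMeasure_restrict.2 measure_Ioc_lt_top.ne
    exact (integrable_const (∫ w, ‖F w‖ ∂ν)).congr (.of_forall fun θ => (hnorm θ).symm)
  -- average the rotation invariance `∫ F = ∫ F (e^{iθ} ·)` over `θ ∈ [0, 2π]` (Fubini)
  simp_rw [circleAverage_norm_eq_intervalIntegral_rotate, integral_smul,
    ← intervalIntegral_integral_swap hint, (hν _).integral_comp (hemb _),
    intervalIntegral.integral_const, smul_smul]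
  rw [sub_zero, inv_mul_cancel₀ (by positivity), one_smul]

theorem hausdorffMeasure_sphere_lt_top (c : ℂ) (R : ℝ) : μH[1] (sphere c R) < ⊤ := by
  rcases lt_or_ge R 0 with hR | hR
  · simp [sphere_eq_empty_of_neg hR]
  have hsphere : sphere c R = circleMap c R '' Set.Ioc 0 (0 + 2 * π) := by
    rw [(periodic_circleMap c R).image_Ioc two_pi_pos 0, range_circleMap, abs_of_nonneg hR]
  calc μH[1] (sphere c R) ≤ (Real.nnabs R : ENNReal) ^ (1 : ℝ) * μH[1] (Set.Ioc 0 (0 + 2 * π)) :=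
        hsphere ▸ (lipschitzWith_circleMap c R).hausdorffMeasure_image_le zero_le_one _
    _ < ⊤ := by
      rw [hausdorffMeasure_real]
      exact ENNReal.mul_lt_top (by simp) measure_Ioc_lt_top

theorem measurePreserving_exp_mul_hausdorffMeasure_sphere (d R θ : ℝ) :
    MeasurePreserving (exp (θ * I) * ·) (μH[d].restrict (sphere (0 : ℂ) R))
      (μH[d].restrict (sphere 0 R)) := by
  let e := (rotation (Circle.exp θ)).toIsometryEquiv
  have he : ⇑e = (exp (θ * I) * ·) := by ext w; simp [e]
  have := (e.measurePreserving_hausdorffMeasure d).restrict_preimage_emb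
    e.toHomeomorph.measurableEmbedding (sphere 0 R)
  rwa [e.preimage_sphere, he, show e.symm 0 = 0 by simp [e]] at this

theorem integral_sphere_kelvinG0_mulVec (lam mu : ℝ) {R : ℝ} {x : EuclideanSpace ℝ (Fin 2)}
    (hx : x ∈ ball 0 R) (v : Fin 2 → ℝ) :
    ∫ y in sphere (0 : EuclideanSpace ℝ (Fin 2)) R, (KelvinG0 lam mu (x - y)).mulVec v ∂μH[1]
      = (μH[1].real (sphere (0 : ℂ) R)
          * ((tau1 lam mu * Real.log R - tau2 lam mu / 2) / (2 * π))) • v := by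
  set L := orthonormalBasisOneI.repr
  set a := L.symm x
  set ζ := complexEquivFinTwo.symm v
  have ha : ‖a‖ < R := by simpa [a] using hx
  set Φ := fun w => kelvinComplex lam mu (a - w) ζ
  have hne : ∀ w ∈ sphere (0 : ℂ) R, a - w ≠ 0 := fun _ => sub_ne_zero_of_norm_lt_of_mem_sphere ha
  have hΦ : Integrable Φ (μH[1].restrict (sphere 0 R)) :=
    ((continuousOn_kelvinComplex lam mu ζ).comp (by fun_prop) hne).integrableOn_of_subset_isCompact
      (isCompact_sphere 0 R) isClosed_sphere.measurableSet subset_rfl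
      (hausdorffMeasure_sphere_lt_top 0 R).ne
  have hΦm : StronglyMeasurable Φ :=
    ((measurable_kelvinComplex lam mu ζ).comp (by fun_prop)).stronglyMeasurable
  have : IsFiniteMeasure (μH[1].restrict (sphere (0 : ℂ) R)) :=
    isFiniteMeasure_restrict.2 (hausdorffMeasure_sphere_lt_top 0 R).ne
  calc ∫ y in sphere (0 : EuclideanSpace ℝ (Fin 2)) R, (KelvinG0 lam mu (x - y)).mulVec v ∂μH[1]
      = ∫ w in sphere (0 : ℂ) R, (KelvinG0 lam mu (x - L w)).mulVec v ∂μH[1] := by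
        have := (L.toIsometryEquiv.measurePreserving_hausdorffMeasure 1).setIntegral_preimage_emb
          L.toHomeomorph.measurableEmbedding (fun y => (KelvinG0 lam mu (x - y)).mulVec v)
          (sphere 0 R)
        simpa using this.symm
    _ = ∫ w in sphere (0 : ℂ) R, complexEquivFinTwo (Φ w) ∂μH[1] := by
        refine setIntegral_congr_fun isClosed_sphere.measurableSet fun w hw => ?_
        rw [← kelvinG0_repr_mulVec lam mu (hne w hw), map_sub, LinearIsometryEquiv.apply_symm_apply,
          ContinuousLinearEquiv.apply_symm_apply]
    _ = complexEquivFinTwo (∫ w in sphere (0 : ℂ) R, circleAverage Φ 0 ‖w‖ ∂μH[1]) := by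
        rw [complexEquivFinTwo.integral_comp_comm, integral_eq_integral_circleAverage_norm
          (measurePreserving_exp_mul_hausdorffMeasure_sphere 1 R) hΦm hΦ]
    _ = complexEquivFinTwo (∫ w in sphere (0 : ℂ) R,
          ((tau1 lam mu * Real.log R - tau2 lam mu / 2) / (2 * π)) • ζ ∂μH[1]) := by
        congr 1
        refine setIntegral_congr_fun isClosed_sphere.measurableSet fun w hw => ?_
        rw [mem_sphere_zero_iff_norm.1 hw]
        exact circleAverage_kelvinComplex_sub lam mu ha ζ
    _ = _ := by
        rw [setIntegral_const, map_smul, map_smul, ContinuousLinearEquiv.apply_symm_apply,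
          smul_smul]

theorem kelvin_single_layer_degenerate_general (R lam mu : ℝ)
    (heq : tau1 lam mu * Real.log R = tau2 lam mu / 2) :
    (∀ v : Fin 2 → ℝ, ∀ x ∈ Metric.ball (0 : EuclideanSpace ℝ (Fin 2)) R,
        (∫ y in Metric.sphere (0 : EuclideanSpace ℝ (Fin 2)) R,
            (KelvinG0 lam mu (x - y)).mulVec v ∂μH[1]) = 0)
    ∧ ∃ v : Fin 2 → ℝ, v ≠ 0 ∧
        ∀ x ∈ Metric.ball (0 : EuclideanSpace ℝ (Fin 2)) R,
          (∫ y in Metric.sphere (0 : EuclideanSpace ℝ (Fin 2)) R,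
              (KelvinG0 lam mu (x - y)).mulVec v ∂μH[1]) = 0 := by
  have hvanish : ∀ v : Fin 2 → ℝ, ∀ x ∈ ball (0 : EuclideanSpace ℝ (Fin 2)) R,
      ∫ y in sphere (0 : EuclideanSpace ℝ (Fin 2)) R, (KelvinG0 lam mu (x - y)).mulVec v ∂μH[1]
        = 0 := fun v x hx => by
    rw [integral_sphere_kelvinG0_mulVec lam mu hx v, heq, sub_self, zero_div, mul_zero, zero_smul]
  exact ⟨hvanish, fun _ => 1, fun h => one_ne_zero (congrFun h 0), hvanish _⟩

/-- If `τ₁ ln R = τ₂/2`, then for every constant vector `v ∈ ℝ²` and every `x` in the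
open disk, `∫_{∂D} G⁰(x − y) v dσ(y) = 0`. In particular, the elastostatic single-layer
operator on the disk annihilates all constant densities (and hence is not injective):
there is a nonzero constant density annihilated by it. -/
theorem kelvin_single_layer_degenerate (R lam mu : ℝ) (hR : 0 < R)
    (hmu : 0 < mu) (hlm : 0 < lam + mu)
    (heq : tau1 lam mu * Real.log R = tau2 lam mu / 2) :
    (∀ v : Fin 2 → ℝ, ∀ x ∈ Metric.ball (0 : EuclideanSpace ℝ (Fin 2)) R,
        (∫ y in Metric.sphere (0 : EuclideanSpace ℝ (Fin 2)) R,
            (KelvinG0 lam mu (x - y)).mulVec v ∂μH[1]) = 0)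
    ∧ ∃ v : Fin 2 → ℝ, v ≠ 0 ∧
        ∀ x ∈ Metric.ball (0 : EuclideanSpace ℝ (Fin 2)) R,
          (∫ y in Metric.sphere (0 : EuclideanSpace ℝ (Fin 2)) R,
              (KelvinG0 lam mu (x - y)).mulVec v ∂μH[1]) = 0 :=
  kelvin_single_layer_degenerate_general R lam mu heq
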